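/- Lower bound on cumulative allocation under GPA when the hub is not exhausted: for any threshold vector γ_1,…,γ_n with γ_i ∈ [0,1], let ℓ be the allocation produced by the GPA policy, and suppose the remaining hub supply at the end of the horizon is positive (s^end = s − Σ_i L_i > 0). Then for every site i ∈ {1,…,n} and every time step t ∈ {0,1,…,T}, the cumulative allocation satisfies L_i^t ≥ γ_i·D_i^t + (k_i^{t+1} − b_i)_+; in particular the total allocation satisfies L_i ≥ γ_i·D_i. -/

import Mathlib

open Finset

/-- `stock b d ℓ t` is the post-replenishment stock `k^{t+1}` at a single site
(with `stock b d ℓ 0 = k^1 = b`), under demands `d` and allocations `ℓ`. -/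
noncomputable def stock (b : ℕ) (d : ℕ → ℕ) (ℓ : ℕ → ℝ) : ℕ → ℝ
  | 0 => (b : ℝ)
  | t + 1 => max (stock b d ℓ t - (d (t + 1) : ℝ)) 0 + ℓ (t + 1)

/-- Sitewise transport cost `Σ_{t=1}^T w_i ⌈ℓ_i^t / c_i⌉`. -/
noncomputable def transportCost (T : ℕ) (wi : ℝ) (ci : ℕ) (ℓ : ℕ → ℝ) : ℝ :=
  ∑ t ∈ Icc 1 T, wi * (⌈ℓ t / (ci : ℝ)⌉ : ℝ)

/-- Sitewise lost-sales penalty `Σ_{t=1}^T p (d_i^t − k_i^t)_+`. -/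
noncomputable def penaltyCost (T : ℕ) (p : ℝ) (b : ℕ) (d : ℕ → ℕ) (ℓ : ℕ → ℝ) : ℝ :=
  ∑ t ∈ Icc 1 T, p * max ((d t : ℝ) - stock b d ℓ (t - 1)) 0

/-- Total cost of an allocation. -/
noncomputable def totalCost {n : ℕ} (T : ℕ) (w : Fin n → ℝ) (c b : Fin n → ℕ)
    (p : ℝ) (d : Fin n → ℕ → ℕ) (ℓ : Fin n → ℕ → ℝ) : ℝ :=
  ∑ i, (transportCost T (w i) (c i) (ℓ i) + penaltyCost T p (b i) (d i) (ℓ i))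

/-- One time step of GPA: eligible sites are processed in index order; site `i` is
eligible if `r i < b i` and `Lprev i ≤ γ i * Dt i`; an eligible site requests
`⌈(b i − r i)/c i⌉` full shipments and receives the min of that and the remaining
hub supply. Returns the remaining supply and the per-site allocation. -/
noncomputable def gpaInner {n : ℕ} (b c : Fin n → ℕ) (γ : Fin n → ℝ)
    (Dt Lprev r : Fin n → ℕ) (rem : ℕ) : ℕ × (Fin n → ℕ) :=
  (List.finRange n).foldl
    (fun (st : ℕ × (Fin n → ℕ)) (i : Fin n) =>
      if r i < b i ∧ (Lprev i : ℝ) ≤ γ i * (Dt i : ℝ) then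
        let q : ℕ := (b i - r i + c i - 1) / c i
        let give : ℕ := min st.1 (c i * q)
        (st.1 - give, Function.update st.2 i give)
      else st)
    (rem, fun _ => 0)

/-- GPA state after `t` time steps: (remaining hub supply, current stocks `k^{t+1}`,
cumulative allocations `L^t`). Initially `(s, b, 0)`. -/
noncomputable def gpaState {n : ℕ} (b c : Fin n → ℕ) (γ : Fin n → ℝ)
    (d : Fin n → ℕ → ℕ) (s : ℕ) : ℕ → ℕ × (Fin n → ℕ) × (Fin n → ℕ)
  | 0 => (s, b, fun _ => 0)
  | t + 1 =>
    let st := gpaState b c γ d s t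
    let r : Fin n → ℕ := fun i => st.2.1 i - d i (t + 1)
    let Dt : Fin n → ℕ := fun i => ∑ u ∈ Icc 1 (t + 1), d i u
    let res := gpaInner b c γ Dt st.2.2 r st.1
    (res.1, fun i => r i + res.2 i, fun i => st.2.2 i + res.2 i)

/-- Cumulative GPA allocation `L_i^t`. -/
noncomputable def gpaL {n : ℕ} (b c : Fin n → ℕ) (γ : Fin n → ℝ)
    (d : Fin n → ℕ → ℕ) (s : ℕ) (i : Fin n) (t : ℕ) : ℕ :=
  (gpaState b c γ d s t).2.2 i

/-- Per-step GPA allocation `ℓ_i^t` (as a real number). -/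
noncomputable def gpaAlloc {n : ℕ} (b c : Fin n → ℕ) (γ : Fin n → ℝ)
    (d : Fin n → ℕ → ℕ) (s : ℕ) (i : Fin n) (t : ℕ) : ℝ :=
  ((gpaL b c γ d s i t - gpaL b c γ d s i (t - 1) : ℕ) : ℝ)

/-!
The bound `γ_i D_i^t + (k_i^{t+1} - b_i)_+ ≤ L_i^t` is an invariant, proved by induction on `t`.
Since the hub is never empty, every eligible site receives its full request of `⌈(b_i - r)/c_i⌉`
shipments, which lifts its stock to at least `b_i`. So after each round a site either has stock
`≥ b_i`, or it was not eligible because `L_i^t > γ_i D_i^{t+1}`. If `r` is the stock left after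
a demand `δ ≤ b_i`, then `γ_i δ + r - b_i ≤ (k_i^{t+1} - b_i)_+` because `γ_i ≤ 1`; in either case
this carries the invariant from `t` to `t + 1`.
-/

lemma Nat.cast_sub_eq_max {R : Type*} [Ring R] [LinearOrder R] [IsStrictOrderedRing R] (a b : ℕ) :
    ((a - b : ℕ) : R) = max ((a : R) - b) 0 := by
  rcases le_total b a with h | h <;> simp [h, Nat.cast_sub]

lemma Nat.le_mul_add_sub_one_div {m c : ℕ} (hc : 0 < c) : m ≤ c * ((m + c - 1) / c) := by
  have := Nat.lt_mul_div_succ (m + c - 1) hc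
  rw [Nat.mul_add_one] at this
  omega

lemma gpa_invariant_step {γ D δ k b L r g : ℝ} (hγ : γ ≤ 1) (hδ : 0 ≤ δ)
    (hr : r + δ ≤ k ∨ r + δ ≤ b) (hg : 0 ≤ g) (hrefill : b ≤ r + g ∨ γ * (D + δ) < L)
    (hL : γ * D + max (k - b) 0 ≤ L) :
    γ * (D + δ) + max (r + g - b) 0 ≤ L + g := by
  have hγδ : γ * δ ≤ δ := mul_le_of_le_one_left hδ hγ
  have hdemand : γ * (D + δ) + (r - b) ≤ L := by
    rcases hr with h | h <;> linarith [le_max_left (k - b) 0, le_max_right (k - b) 0]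
  suffices max (r + g - b) 0 ≤ L + g - γ * (D + δ) by linarith
  refine max_le (by linarith) ?_
  rcases hrefill with h | h <;> linarith

section GreedyServe

variable {n : ℕ} (P : Fin n → Prop) [DecidablePred P] (req : Fin n → ℕ)

def greedyServe (st : ℕ × (Fin n → ℕ)) (i : Fin n) : ℕ × (Fin n → ℕ) :=
  if P i then (st.1 - min st.1 (req i), Function.update st.2 i (min st.1 (req i))) else st

lemma greedyServe_fst_le (st : ℕ × (Fin n → ℕ)) (i : Fin n) :
    (greedyServe P req st i).1 ≤ st.1 := by
  unfold greedyServe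
  split_ifs
  exacts [Nat.sub_le _ _, le_rfl]

lemma greedyServe_snd_of_ne (st : ℕ × (Fin n → ℕ)) {i j : Fin n} (h : j ≠ i) :
    (greedyServe P req st i).2 j = st.2 j := by
  unfold greedyServe
  split_ifs
  exacts [Function.update_of_ne h _ _, rfl]

lemma foldl_greedyServe_fst_le (l : List (Fin n)) (st : ℕ × (Fin n → ℕ)) :
    (l.foldl (greedyServe P req) st).1 ≤ st.1 := by
  induction l generalizing st with
  | nil => exact le_rfl
  | cons i l ih => exact (ih _).trans (greedyServe_fst_le P req st i)

lemma foldl_greedyServe_snd_of_notMem (l : List (Fin n)) (st : ℕ × (Fin n → ℕ)) {j : Fin n}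
    (hj : j ∉ l) : (l.foldl (greedyServe P req) st).2 j = st.2 j := by
  induction l generalizing st with
  | nil => rfl
  | cons i l ih =>
    rw [List.foldl_cons, ih _ (fun h => hj (List.mem_cons_of_mem _ h)),
      greedyServe_snd_of_ne P req st (by rintro rfl; exact hj List.mem_cons_self)]

lemma foldl_greedyServe_fst_add_sum (l : List (Fin n)) (hl : l.Nodup) (st : ℕ × (Fin n → ℕ))
    (hst : ∀ i ∈ l, st.2 i = 0) :
    (l.foldl (greedyServe P req) st).1 + ∑ j, (l.foldl (greedyServe P req) st).2 j
      = st.1 + ∑ j, st.2 j := by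
  induction l generalizing st with
  | nil => rfl
  | cons i l ih =>
    obtain ⟨hi, hl⟩ := List.nodup_cons.mp hl
    have hst' : ∀ j ∈ l, (greedyServe P req st i).2 j = 0 := fun j hj => by
      rw [greedyServe_snd_of_ne P req st (by rintro rfl; exact hi hj)]
      exact hst j (List.mem_cons_of_mem _ hj)
    rw [List.foldl_cons, ih hl _ hst']
    unfold greedyServe
    split_ifs
    · have hsum := Finset.sum_eq_add_sum_sdiff_singleton_of_mem (Finset.mem_univ i) st.2
      rw [Finset.sum_update_of_mem (Finset.mem_univ i), hsum, hst i List.mem_cons_self]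
      have := min_le_left st.1 (req i)
      omega
    · rfl

lemma foldl_greedyServe_snd_of_pos (l : List (Fin n)) (hl : l.Nodup) (st : ℕ × (Fin n → ℕ))
    (hpos : 0 < (l.foldl (greedyServe P req) st).1) {i : Fin n} (hi : i ∈ l) :
    (l.foldl (greedyServe P req) st).2 i = if P i then req i else st.2 i := by
  induction l generalizing st with
  | nil => exact absurd hi List.not_mem_nil
  | cons j l ih =>
    obtain ⟨hj, hl⟩ := List.nodup_cons.mp hl
    rw [List.foldl_cons] at hpos ⊢
    rcases List.mem_cons.mp hi with rfl | hil
    · rw [foldl_greedyServe_snd_of_notMem P req l _ hj]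
      have hpos' := hpos.trans_le (foldl_greedyServe_fst_le P req l _)
      unfold greedyServe at hpos' ⊢
      split_ifs at hpos' ⊢
      · simp only [Function.update_self] at hpos' ⊢
        omega
      · rfl
    · rw [ih hl _ hpos hil, greedyServe_snd_of_ne P req st (by rintro rfl; exact hj hil)]

end GreedyServe

section GPA

variable {n : ℕ} (b c : Fin n → ℕ) (γ : Fin n → ℝ)

abbrev GpaEligible (Dt Lprev r : Fin n → ℕ) (i : Fin n) : Prop :=
  r i < b i ∧ (Lprev i : ℝ) ≤ γ i * (Dt i : ℝ)

lemma gpaInner_eq_foldl (Dt Lprev r : Fin n → ℕ) (rem : ℕ) :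
    gpaInner b c γ Dt Lprev r rem
      = (List.finRange n).foldl
          (greedyServe (GpaEligible b γ Dt Lprev r) (fun i => c i * ((b i - r i + c i - 1) / c i)))
          (rem, fun _ => 0) :=
  rfl

lemma gpaInner_fst_le (Dt Lprev r : Fin n → ℕ) (rem : ℕ) :
    (gpaInner b c γ Dt Lprev r rem).1 ≤ rem :=
  foldl_greedyServe_fst_le _ _ _ _

lemma gpaInner_fst_add_sum (Dt Lprev r : Fin n → ℕ) (rem : ℕ) :
    (gpaInner b c γ Dt Lprev r rem).1 + ∑ j, (gpaInner b c γ Dt Lprev r rem).2 j = rem := by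
  rw [gpaInner_eq_foldl]
  simpa using foldl_greedyServe_fst_add_sum _ _ _ (List.nodup_finRange n) (rem, fun _ => 0)
    (fun _ _ => rfl)

lemma gpaInner_snd_of_pos (Dt Lprev r : Fin n → ℕ) (rem : ℕ)
    (hpos : 0 < (gpaInner b c γ Dt Lprev r rem).1) (i : Fin n) :
    (gpaInner b c γ Dt Lprev r rem).2 i
      = if GpaEligible b γ Dt Lprev r i then c i * ((b i - r i + c i - 1) / c i) else 0 :=
  foldl_greedyServe_snd_of_pos _ _ _ (List.nodup_finRange n) _ hpos (List.mem_finRange i)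

variable (d : Fin n → ℕ → ℕ) (s : ℕ)

/-- The round at time `t + 1`: `(gpaStep t).2 i` is the shipment `ℓ_i^{t+1}`. -/
noncomputable def gpaStep (t : ℕ) : ℕ × (Fin n → ℕ) :=
  gpaInner b c γ (fun j => ∑ u ∈ Icc 1 (t + 1), d j u) (gpaState b c γ d s t).2.2
    (fun j => (gpaState b c γ d s t).2.1 j - d j (t + 1)) (gpaState b c γ d s t).1

lemma gpaState_fst_succ (t : ℕ) : (gpaState b c γ d s (t + 1)).1 = (gpaStep b c γ d s t).1 :=
  rfl

lemma gpaState_stock_succ (t : ℕ) (i : Fin n) :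
    (gpaState b c γ d s (t + 1)).2.1 i
      = ((gpaState b c γ d s t).2.1 i - d i (t + 1)) + (gpaStep b c γ d s t).2 i :=
  rfl

lemma gpaL_succ (t : ℕ) (i : Fin n) :
    gpaL b c γ d s i (t + 1) = gpaL b c γ d s i t + (gpaStep b c γ d s t).2 i :=
  rfl

lemma gpaAlloc_succ (t : ℕ) (i : Fin n) :
    gpaAlloc b c γ d s i (t + 1) = (gpaStep b c γ d s t).2 i := by
  simp [gpaAlloc, gpaL_succ]

lemma stock_gpaAlloc (i : Fin n) (t : ℕ) :
    stock (b i) (d i) (gpaAlloc b c γ d s i) t = (gpaState b c γ d s t).2.1 i := by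
  induction t with
  | zero => rfl
  | succ t ih =>
    rw [stock, ih, gpaAlloc_succ, gpaState_stock_succ, Nat.cast_add, Nat.cast_sub_eq_max]

lemma gpaState_fst_antitone : Antitone fun t => (gpaState b c γ d s t).1 :=
  antitone_nat_of_succ_le fun _ => gpaInner_fst_le _ _ _ _ _ _ _

lemma gpaState_fst_add_sum (t : ℕ) :
    (gpaState b c γ d s t).1 + ∑ j, gpaL b c γ d s j t = s := by
  induction t with
  | zero => simp [gpaState, gpaL]
  | succ t ih =>
    simp only [gpaState_fst_succ, gpaL_succ, Finset.sum_add_distrib]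
    have := gpaInner_fst_add_sum b c γ (fun j => ∑ u ∈ Icc 1 (t + 1), d j u)
      (gpaState b c γ d s t).2.2 (fun j => (gpaState b c γ d s t).2.1 j - d j (t + 1))
      (gpaState b c γ d s t).1
    rw [gpaStep]
    unfold gpaL at ih ⊢
    omega

lemma gpaState_fst_pos {T : ℕ} (hend : ∑ i, gpaL b c γ d s i T < s) {t : ℕ} (ht : t ≤ T) :
    0 < (gpaState b c γ d s t).1 := by
  have := gpaState_fst_add_sum b c γ d s T
  exact (by omega : 0 < (gpaState b c γ d s T).1).trans_le (gpaState_fst_antitone b c γ d s ht)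

lemma gpaStep_refill (i : Fin n) (hc : 1 ≤ c i) {t : ℕ}
    (hpos : 0 < (gpaState b c γ d s (t + 1)).1) :
    b i ≤ ((gpaState b c γ d s t).2.1 i - d i (t + 1)) + (gpaStep b c γ d s t).2 i
      ∨ γ i * ((∑ u ∈ Icc 1 (t + 1), d i u : ℕ) : ℝ) < gpaL b c γ d s i t := by
  rw [gpaStep, gpaInner_snd_of_pos _ _ _ _ _ _ _ hpos]
  split_ifs with helig
  · have := Nat.le_mul_add_sub_one_div (m := b i - ((gpaState b c γ d s t).2.1 i - d i (t + 1))) hc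
    left
    omega
  · rw [GpaEligible, not_and_or, not_lt, not_le] at helig
    exact helig.imp (fun h => h.trans (Nat.le_add_right _ _)) id

lemma gpa_lowerBound_invariant {T : ℕ} (hc : ∀ i, 1 ≤ c i)
    (hd : ∀ i, ∀ t ∈ Icc 1 T, d i t ≤ b i) (hγ : ∀ i, γ i ≤ 1)
    (hend : ∑ i, gpaL b c γ d s i T < s) (i : Fin n) {t : ℕ} (ht : t ≤ T) :
    γ i * ((∑ u ∈ Icc 1 t, d i u : ℕ) : ℝ) + max ((gpaState b c γ d s t).2.1 i - (b i : ℝ)) 0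
      ≤ gpaL b c γ d s i t := by
  induction t with
  | zero => simp [gpaState, gpaL]
  | succ t ih =>
    set k := (gpaState b c γ d s t).2.1 i
    set δ := d i (t + 1)
    have hδ : δ ≤ b i := hd i (t + 1) (Finset.mem_Icc.mpr ⟨Nat.le_add_left 1 t, ht⟩)
    have hD : ((∑ u ∈ Icc 1 (t + 1), d i u : ℕ) : ℝ) = ((∑ u ∈ Icc 1 t, d i u : ℕ) : ℝ) + δ := by
      rw [Finset.sum_Icc_succ_top (Nat.le_add_left 1 t), Nat.cast_add]
    have hr : ((k - δ : ℕ) : ℝ) + δ ≤ k ∨ ((k - δ : ℕ) : ℝ) + δ ≤ b i := by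
      have : k - δ + δ ≤ k ∨ k - δ + δ ≤ b i := by omega
      exact_mod_cast this
    have hrefill := gpaStep_refill b c γ d s i (hc i) (gpaState_fst_pos b c γ d s hend ht)
    rw [hD] at hrefill ⊢
    rw [gpaState_stock_succ, gpaL_succ, Nat.cast_add, Nat.cast_add]
    exact gpa_invariant_step (hγ i) (Nat.cast_nonneg δ) hr (Nat.cast_nonneg _)
      (by exact_mod_cast hrefill) (ih (Nat.le_of_succ_le ht))

end GPA

theorem gpa_cumulative_lower_bound_not_exhausted_general
    (n T : ℕ) (c b : Fin n → ℕ) (hc : ∀ i, 1 ≤ c i)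
    (s : ℕ) (d : Fin n → ℕ → ℕ) (hd : ∀ i, ∀ t ∈ Icc 1 T, d i t ≤ b i)
    (γ : Fin n → ℝ) (hγ : ∀ i, 0 ≤ γ i ∧ γ i ≤ 1)
    (hend : (∑ i, gpaL b c γ d s i T) < s) :
    (∀ i, ∀ t ≤ T,
        γ i * ((∑ u ∈ Icc 1 t, d i u : ℕ) : ℝ)
          + max (stock (b i) (d i) (fun u => gpaAlloc b c γ d s i u) t - (b i : ℝ)) 0
        ≤ (gpaL b c γ d s i t : ℝ)) ∧
    (∀ i, γ i * ((∑ u ∈ Icc 1 T, d i u : ℕ) : ℝ) ≤ (gpaL b c γ d s i T : ℝ)) := by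
  have hinv := fun i {t} (ht : t ≤ T) =>
    gpa_lowerBound_invariant b c γ d s hc hd (fun i => (hγ i).2) hend i ht
  refine ⟨fun i t ht => ?_, fun i => ?_⟩
  · rw [stock_gpaAlloc]
    exact hinv i ht
  · exact (le_add_of_nonneg_right (le_max_right _ _)).trans (hinv i le_rfl)

/-- **Lower bound on cumulative allocation under GPA when the hub is not
exhausted.** If `s^end = s − Σ_i L_i > 0`, then for every site `i` and time
`t ∈ {0,…,T}` we have `L_i^t ≥ γ_i·D_i^t + (k_i^{t+1} − b_i)_+`; in particular
`L_i ≥ γ_i·D_i`. -/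
theorem gpa_cumulative_lower_bound_not_exhausted
    (n T : ℕ) (c b : Fin n → ℕ) (hc : ∀ i, 1 ≤ c i)
    (w : Fin n → ℝ) (hw : ∀ i, 0 ≤ w i)
    (p : ℝ) (hp : 0 ≤ p) (hwp : ∀ i, w i ≤ p * c i)
    (s : ℕ) (d : Fin n → ℕ → ℕ) (hd : ∀ i, ∀ t ∈ Icc 1 T, d i t ≤ b i)
    (γ : Fin n → ℝ) (hγ : ∀ i, 0 ≤ γ i ∧ γ i ≤ 1)
    (hend : (∑ i, gpaL b c γ d s i T) < s) :
    (∀ i, ∀ t ≤ T,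
        γ i * ((∑ u ∈ Icc 1 t, d i u : ℕ) : ℝ)
          + max (stock (b i) (d i) (fun u => gpaAlloc b c γ d s i u) t - (b i : ℝ)) 0
        ≤ (gpaL b c γ d s i t : ℝ)) ∧
    (∀ i, γ i * ((∑ u ∈ Icc 1 T, d i u : ℕ) : ℝ) ≤ (gpaL b c γ d s i T : ℝ)) :=
  gpa_cumulative_lower_bound_not_exhausted_general n T c b hc s d hd γ hγ hend
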